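/- arXiv:1603.02489 — 18 statements merged into one kernel-verified Lean document; each statement's English description precedes it below -/
import Mathlib

section
/- Let L be a meet-complemented lattice. Then for all a, b in L: (i) (a ⊔ b) ⊓ ¬b ≤ ¬¬a; (ii) (a ⊔ ¬b) ⊓ b ≤ ¬¬a; (iii) (a ⊔ ¬b) ⊓ ¬a ≤ ¬b; (iv) if a ⊔ b = 1 then ¬b ≤ ¬¬a; (v) if a ⊔ ¬b = 1 then b ≤ ¬¬a; (vi) if a ⊔ ¬b = 1 then ¬a ≤ ¬b. -/
theorem key_lemma {L : Type*} [Lattice L] [BoundedOrder L]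
    (neg : L → L)
    (hnegE : ∀ a : L, a ⊓ neg a = ⊥)
    (hnegI : ∀ a b : L, a ⊓ b = ⊥ → b ≤ neg a)
    (m x y : L) (h1 : m ⊓ x = ⊥) (h2 : m ⊓ y = ⊥) (h3 : m ≤ x ⊔ y) :
    m = ⊥ := by
  have hx : x ≤ neg m := hnegI m x h1
  have hy : y ≤ neg m := hnegI m y h2
  have : m ≤ neg m := le_trans h3 (sup_le hx hy)
  have := le_inf (le_refl m) this
  rw [hnegE m] at this
  exact le_bot_iff.mp this

/-- Lemma on meet-complemented lattices (not necessarily distributive). -/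
theorem stmt_0 {L : Type*} [Lattice L] [BoundedOrder L]
    (neg : L → L)
    (hnegE : ∀ a : L, a ⊓ neg a = ⊥)
    (hnegI : ∀ a b : L, a ⊓ b = ⊥ → b ≤ neg a) :
    ∀ a b : L,
      ((a ⊔ b) ⊓ neg b ≤ neg (neg a)) ∧
      ((a ⊔ neg b) ⊓ b ≤ neg (neg a)) ∧
      ((a ⊔ neg b) ⊓ neg a ≤ neg b) ∧
      (a ⊔ b = ⊤ → neg b ≤ neg (neg a)) ∧
      (a ⊔ neg b = ⊤ → b ≤ neg (neg a)) ∧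
      (a ⊔ neg b = ⊤ → neg a ≤ neg b) := by
  intro a b
  have key := key_lemma neg hnegE hnegI
  have boteq : ∀ m a : L, m ≤ neg a → m ⊓ a = ⊥ := fun m a h =>
    le_bot_iff.mp (by calc m ⊓ a ≤ neg a ⊓ a := inf_le_inf_right a h
                        _ = a ⊓ neg a := inf_comm _ _
                        _ = ⊥ := hnegE a)
  have h1 : (a ⊔ b) ⊓ neg b ≤ neg (neg a) := by
    apply hnegI
    set m := neg a ⊓ ((a ⊔ b) ⊓ neg b) with hm
    apply key m a b
    · exact boteq m a (hm ▸ inf_le_left)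
    · have hb : m ≤ neg b := le_trans inf_le_right inf_le_right
      exact le_bot_iff.mp (by calc m ⊓ b ≤ neg b ⊓ b := inf_le_inf_right _ hb
                                _ = b ⊓ neg b := inf_comm _ _
                                _ = ⊥ := hnegE b)
    · exact le_trans inf_le_right inf_le_left
  have h2 : (a ⊔ neg b) ⊓ b ≤ neg (neg a) := by
    apply hnegI
    set m := neg a ⊓ ((a ⊔ neg b) ⊓ b) with hm
    apply key m a (neg b)
    · exact boteq m a inf_le_left
    · have hb : m ≤ b := le_trans inf_le_right inf_le_right
      exact le_bot_iff.mp (by calc m ⊓ neg b ≤ b ⊓ neg b := inf_le_inf_right _ hb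
                                _ = ⊥ := hnegE b)
    · exact le_trans inf_le_right inf_le_left
  have h3 : (a ⊔ neg b) ⊓ neg a ≤ neg b := by
    have : b ⊓ ((a ⊔ neg b) ⊓ neg a) = ⊥ := by
      set m := b ⊓ ((a ⊔ neg b) ⊓ neg a) with hm
      apply key m a (neg b)
      · exact boteq m a (le_trans inf_le_right inf_le_right)
      · have hb : m ≤ b := inf_le_left
        exact le_bot_iff.mp (by calc m ⊓ neg b ≤ b ⊓ neg b := inf_le_inf_right _ hb
                                  _ = ⊥ := hnegE b)
      · exact le_trans inf_le_right inf_le_left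
    exact hnegI b _ this
  refine ⟨h1, h2, h3, ?_, ?_, ?_⟩
  · intro hab
    calc neg b = (a ⊔ b) ⊓ neg b := by rw [hab, top_inf_eq]
      _ ≤ neg (neg a) := h1
  · intro hab
    calc b = (a ⊔ neg b) ⊓ b := by rw [hab, top_inf_eq]
      _ ≤ neg (neg a) := h2
  · intro hab
    calc neg a = (a ⊔ neg b) ⊓ neg a := by rw [hab, top_inf_eq]
      _ ≤ neg b := h3
end

section
/- Let L be a meet-complemented lattice with a necessity operator □. Then □ is monotone (if a ≤ b then □a ≤ □b), and ¬¬□a = □a for every a in L. -/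
/-- Necessity is monotone and ¬¬□a = □a. -/
theorem stmt_2 {L : Type*} [Lattice L] [BoundedOrder L]
    (neg : L → L)
    (hnegE : ∀ a : L, a ⊓ neg a = ⊥)
    (hnegI : ∀ a b : L, a ⊓ b = ⊥ → b ≤ neg a)
    (box : L → L)
    (hboxE : ∀ a : L, a ⊔ neg (box a) = ⊤)
    (hboxI : ∀ a b : L, a ⊔ neg b = ⊤ → b ≤ box a) :
    (∀ a b : L, a ≤ b → box a ≤ box b) ∧
    (∀ a : L, neg (neg (box a)) = box a) := by
  have hanti : ∀ a b : L, a ≤ b → neg b ≤ neg a := by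
    intro a b h
    apply hnegI
    have : a ⊓ neg b ≤ b ⊓ neg b := inf_le_inf_right _ h
    rw [hnegE] at this
    exact le_bot_iff.mp this
  have hdn : ∀ a : L, a ≤ neg (neg a) := by
    intro a
    apply hnegI
    rw [inf_comm]; exact hnegE a
  constructor
  · intro a b h
    apply hboxI
    have := hboxE a
    have h2 : a ⊔ neg (box a) ≤ b ⊔ neg (box a) := sup_le_sup_right h _
    rw [this] at h2
    exact top_le_iff.mp h2
  · intro a
    apply le_antisymm
    · apply hboxI
      have h3 : neg (neg (neg (box a))) = neg (box a) :=
        le_antisymm (hanti _ _ (hdn _)) (hdn _)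
      rw [h3]; exact hboxE a
    · exact hdn _
end

section
/- Let L be a meet-complemented lattice with a necessity operator □. Then for every a in L: (i) □¬a ≤ ¬a; (ii) ¬a ≤ □¬□a; (iii) □□a ≤ □a; (iv) ¬¬a ≤ □¬□¬a; (v) □¬□¬a ≤ ¬□¬a. -/
/-- Modal inequalities for □ and ¬ in a meet-complemented lattice. -/
theorem stmt_3 {L : Type*} [Lattice L] [BoundedOrder L]
    (neg : L → L)
    (hnegE : ∀ a : L, a ⊓ neg a = ⊥)
    (hnegI : ∀ a b : L, a ⊓ b = ⊥ → b ≤ neg a)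
    (box : L → L)
    (hboxE : ∀ a : L, a ⊔ neg (box a) = ⊤)
    (hboxI : ∀ a b : L, a ⊔ neg b = ⊤ → b ≤ box a) :
    ∀ a : L,
      (box (neg a) ≤ neg a) ∧
      (neg a ≤ box (neg (box a))) ∧
      (box (box a) ≤ box a) ∧
      (neg (neg a) ≤ box (neg (box (neg a)))) ∧
      (box (neg (box (neg a))) ≤ neg (box (neg a))) := by
  -- double negation introduction
  have dni : ∀ x : L, x ≤ neg (neg x) := by
    intro x
    exact hnegI _ _ (by rw [inf_comm]; exact hnegE x)
  -- key lemma: if x ⊔ y = ⊤ then ¬x ⊓ ¬y = ⊥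
  have key : ∀ x y : L, x ⊔ y = ⊤ → neg x ⊓ neg y = ⊥ := by
    intro x y h
    set w := neg x ⊓ neg y with hw
    have hx : x ≤ neg w := by
      apply hnegI
      apply le_bot_iff.mp
      calc w ⊓ x ≤ neg x ⊓ x := inf_le_inf inf_le_left le_rfl
        _ = x ⊓ neg x := inf_comm _ _
        _ = ⊥ := hnegE x
    have hy : y ≤ neg w := by
      apply hnegI
      apply le_bot_iff.mp
      calc w ⊓ y ≤ neg y ⊓ y := inf_le_inf inf_le_right le_rfl
        _ = y ⊓ neg y := inf_comm _ _
        _ = ⊥ := hnegE y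
    have htop : neg w = ⊤ := top_le_iff.mp (h ▸ sup_le hx hy)
    have := hnegE w
    rw [htop, inf_top_eq] at this
    exact this
  -- (i) generalized: box (neg x) ≤ neg x for all x
  have part1 : ∀ x : L, box (neg x) ≤ neg x := by
    intro x
    apply hnegI
    have hk := key (neg x) (neg (box (neg x))) (hboxE (neg x))
    have hle : x ⊓ box (neg x) ≤ neg (neg x) ⊓ neg (neg (box (neg x))) :=
      inf_le_inf (dni x) (dni _)
    exact le_bot_iff.mp (hk ▸ hle)
  intro a
  refine ⟨part1 a, ?_, ?_, ?_, part1 (box (neg a))⟩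
  · -- (ii) neg a ≤ box (neg (box a))
    apply hboxI
    apply top_le_iff.mp
    calc (⊤ : L) = a ⊔ neg (box a) := (hboxE a).symm
      _ ≤ neg (neg a) ⊔ neg (box a) := sup_le_sup_right (dni a) _
      _ = neg (box a) ⊔ neg (neg a) := sup_comm _ _
  · -- (iii) box (box a) ≤ box a
    have hk := key (box a) (neg (box (box a))) (hboxE (box a))
    have hle : box (box a) ⊓ neg (box a) = ⊥ := by
      apply le_bot_iff.mp
      calc box (box a) ⊓ neg (box a)
          ≤ neg (neg (box (box a))) ⊓ neg (box a) := inf_le_inf (dni _) le_rfl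
        _ = neg (box a) ⊓ neg (neg (box (box a))) := inf_comm _ _
        _ = ⊥ := hk
    have hmono : neg (box a) ≤ neg (box (box a)) := hnegI _ _ hle
    apply hboxI
    apply top_le_iff.mp
    calc (⊤ : L) = a ⊔ neg (box a) := (hboxE a).symm
      _ ≤ a ⊔ neg (box (box a)) := sup_le_sup_left hmono _
  · -- (iv) neg (neg a) ≤ box (neg (box (neg a)))
    apply hboxI
    apply top_le_iff.mp
    calc (⊤ : L) = neg a ⊔ neg (box (neg a)) := (hboxE (neg a)).symm
      _ ≤ neg (neg (neg a)) ⊔ neg (box (neg a)) := sup_le_sup_right (dni (neg a)) _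
      _ = neg (box (neg a)) ⊔ neg (neg (neg a)) := sup_comm _ _
end

section
/- Let L be a meet-complemented lattice with a dual negation D. Then the operation a ↦ ¬(D a) satisfies the defining properties of a necessity operator: for all a, b in L, a ⊔ ¬¬(D a) = 1, and if a ⊔ ¬b = 1 then b ≤ ¬(D a). Consequently, if L also carries a necessity operator □, then □a = ¬(D a) for all a. -/
/-- If a dual negation D exists, then ¬D is a necessity operator, and any
necessity operator coincides with ¬D. -/
theorem stmt_5 {L : Type*} [Lattice L] [BoundedOrder L]
    (neg : L → L)
    (hnegE : ∀ a : L, a ⊓ neg a = ⊥)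
    (hnegI : ∀ a b : L, a ⊓ b = ⊥ → b ≤ neg a)
    (D : L → L)
    (hDI : ∀ a : L, a ⊔ D a = ⊤)
    (hDE : ∀ a b : L, a ⊔ b = ⊤ → D a ≤ b) :
    ((∀ a : L, a ⊔ neg (neg (D a)) = ⊤) ∧
     (∀ a b : L, a ⊔ neg b = ⊤ → b ≤ neg (D a))) ∧
    (∀ box : L → L,
      (∀ a : L, a ⊔ neg (box a) = ⊤) →
      (∀ a b : L, a ⊔ neg b = ⊤ → b ≤ box a) →
      ∀ a : L, box a = neg (D a)) := by
  have hE : ∀ a : L, a ⊔ neg (neg (D a)) = ⊤ := by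
    intro a
    have h1 : D a ≤ neg (neg (D a)) :=
      hnegI _ _ (by rw [inf_comm]; exact hnegE (D a))
    exact top_le_iff.mp (le_trans (hDI a).ge (sup_le_sup_left h1 a))
  have hI : ∀ a b : L, a ⊔ neg b = ⊤ → b ≤ neg (D a) := by
    intro a b h
    have h1 : D a ≤ neg b := hDE a (neg b) h
    apply hnegI
    have h2 : D a ⊓ b ≤ neg b ⊓ b := inf_le_inf_right b h1
    have h3 : neg b ⊓ b = ⊥ := by rw [inf_comm]; exact hnegE b
    exact le_bot_iff.mp (h3 ▸ h2)
  refine ⟨⟨hE, hI⟩, fun box hboxE hboxI a => le_antisymm ?_ ?_⟩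
  · exact hI a (box a) (hboxE a)
  · exact hboxI a (neg (D a)) (hE a)
end

section
/- Let L be a meet-complemented lattice with a necessity operator □ and let a be an element of L. Then a is Boolean (i.e. a ⊔ ¬a = 1) if and only if a ≤ □a. Moreover, a ≤ □a if and only if a ≤ □ⁿa for every positive natural number n (where □ⁿ denotes the n-fold iterate of □). -/
/-- a is Boolean iff a ≤ □a, iff a ≤ □ⁿa for every positive n. -/
theorem stmt_6 {L : Type*} [Lattice L] [BoundedOrder L]
    (neg : L → L)
    (hnegE : ∀ a : L, a ⊓ neg a = ⊥)
    (hnegI : ∀ a b : L, a ⊓ b = ⊥ → b ≤ neg a)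
    (box : L → L)
    (hboxE : ∀ a : L, a ⊔ neg (box a) = ⊤)
    (hboxI : ∀ a b : L, a ⊔ neg b = ⊤ → b ≤ box a)
    (a : L) :
    (a ⊔ neg a = ⊤ ↔ a ≤ box a) ∧
    (a ≤ box a ↔ ∀ n : ℕ, 0 < n → a ≤ box^[n] a) := by
  have negAnti : ∀ x y : L, x ≤ y → neg y ≤ neg x := by
    intro x y hxy
    apply hnegI
    have : x ⊓ neg y ≤ y ⊓ neg y := inf_le_inf hxy le_rfl
    rw [hnegE] at this
    exact le_bot_iff.mp this
  have boxMono : ∀ x y : L, x ≤ y → box x ≤ box y := by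
    intro x y hxy
    apply hboxI
    have := hboxE x
    exact top_unique (this ▸ sup_le_sup hxy le_rfl)
  constructor
  · constructor
    · intro h
      exact hboxI a a h
    · intro h
      have h1 := hboxE a
      have h2 : neg (box a) ≤ neg a := negAnti _ _ h
      exact top_unique (h1 ▸ sup_le_sup le_rfl h2)
  · constructor
    · intro h n hn
      induction n with
      | zero => exact absurd hn (by simp)
      | succ m ih =>
        rcases Nat.eq_zero_or_pos m with hm | hm
        · subst hm; simpa using h
        · have := ih hm
          calc a ≤ box a := h
            _ ≤ box (box^[m] a) := boxMono _ _ this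
            _ = box^[m+1] a := (Function.iterate_succ_apply' box m a).symm
    · intro h
      simpa using h 1 one_pos
end

section
/- Let L be a meet-complemented lattice with a possibility operator ◇. Then ◇ is monotone (if a ≤ b then ◇a ≤ ◇b), and ◇¬¬a = ◇a for every a in L. -/
/-- Possibility is monotone and ◇¬¬a = ◇a. -/
theorem stmt_7 {L : Type*} [Lattice L] [BoundedOrder L]
    (neg : L → L)
    (hnegE : ∀ a : L, a ⊓ neg a = ⊥)
    (hnegI : ∀ a b : L, a ⊓ b = ⊥ → b ≤ neg a)
    (dia : L → L)
    (hdiaI : ∀ a : L, neg a ⊔ dia a = ⊤)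
    (hdiaE : ∀ a b : L, neg a ⊔ b = ⊤ → dia a ≤ b) :
    (∀ a b : L, a ≤ b → dia a ≤ dia b) ∧
    (∀ a : L, dia (neg (neg a)) = dia a) := by
  have anti : ∀ a b : L, a ≤ b → neg b ≤ neg a := by
    intro a b hab
    apply hnegI
    have : a ⊓ neg b ≤ b ⊓ neg b := inf_le_inf_right _ hab
    exact le_bot_iff.mp (by simpa [hnegE b] using this)
  have mono : ∀ a b : L, a ≤ b → dia a ≤ dia b := by
    intro a b hab
    apply hdiaE
    have := hdiaI b
    exact top_le_iff.mp (this ▸ sup_le_sup_right (anti a b hab) (dia b))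
  refine ⟨mono, fun a => le_antisymm ?_ ?_⟩
  · apply hdiaE
    have h1 : neg a ≤ neg (neg (neg a)) :=
      hnegI _ _ (by rw [inf_comm]; exact hnegE (neg a))
    exact top_le_iff.mp ((hdiaI a) ▸ sup_le_sup_right h1 (dia a))
  · exact mono _ _ (hnegI _ _ (by rw [inf_comm]; exact hnegE a))
end

section
/- Let L be a meet-complemented lattice with a possibility operator ◇. Then for every a in L: (i) ¬◇a ≤ ¬a; (ii) ◇a ≤ ◇◇a; (iii) ◇¬◇a ≤ ¬a; (iv) ◇¬◇¬a ≤ ◇a; (v) ¬a ≤ ¬¬◇¬a. -/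
/-- Modal inequalities for ◇ and ¬ in a meet-complemented lattice. -/
theorem stmt_8 {L : Type*} [Lattice L] [BoundedOrder L]
    (neg : L → L)
    (hnegE : ∀ a : L, a ⊓ neg a = ⊥)
    (hnegI : ∀ a b : L, a ⊓ b = ⊥ → b ≤ neg a)
    (dia : L → L)
    (hdiaI : ∀ a : L, neg a ⊔ dia a = ⊤)
    (hdiaE : ∀ a b : L, neg a ⊔ b = ⊤ → dia a ≤ b) :
    ∀ a : L,
      (neg (dia a) ≤ neg a) ∧
      (dia a ≤ dia (dia a)) ∧
      (dia (neg (dia a)) ≤ neg a) ∧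
      (dia (neg (dia (neg a))) ≤ dia a) ∧
      (neg a ≤ neg (neg (dia (neg a)))) := by
  -- double negation introduction
  have dni : ∀ a : L, a ≤ neg (neg a) := by
    intro a
    exact hnegI (neg a) a (by rw [inf_comm]; exact hnegE a)
  -- ¬x ⊓ ¬y ≤ ¬(x ⊔ y)
  have negsup : ∀ x y : L, neg x ⊓ neg y ≤ neg (x ⊔ y) := by
    intro x y
    apply hnegI
    have hx : x ⊓ (neg x ⊓ neg y) = ⊥ := by
      have h := inf_le_inf_left x (inf_le_left : neg x ⊓ neg y ≤ neg x)
      rw [hnegE x] at h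
      exact le_antisymm h bot_le
    have hy : y ⊓ (neg x ⊓ neg y) = ⊥ := by
      have h := inf_le_inf_left y (inf_le_right : neg x ⊓ neg y ≤ neg y)
      rw [hnegE y] at h
      exact le_antisymm h bot_le
    have hxn : x ≤ neg (neg x ⊓ neg y) := hnegI _ _ (by rw [inf_comm] at hx; exact hx)
    have hyn : y ≤ neg (neg x ⊓ neg y) := hnegI _ _ (by rw [inf_comm] at hy; exact hy)
    have hs : x ⊔ y ≤ neg (neg x ⊓ neg y) := sup_le hxn hyn
    have h := inf_le_inf_right (neg x ⊓ neg y) hs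
    rw [inf_comm (neg (neg x ⊓ neg y)), hnegE (neg x ⊓ neg y)] at h
    exact le_antisymm h bot_le
  have negtop : neg (⊤ : L) = ⊥ := by
    have := hnegE (⊤ : L); rwa [top_inf_eq] at this
  -- (i)
  have h1 : ∀ a : L, neg (dia a) ≤ neg a := by
    intro a
    apply hnegI
    have h0 : a ⊓ neg (dia a) ≤ neg (neg a) ⊓ neg (dia a) :=
      inf_le_inf_right _ (dni a)
    have h2 : neg (neg a) ⊓ neg (dia a) ≤ neg (neg a ⊔ dia a) := negsup _ _
    rw [hdiaI a, negtop] at h2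
    exact le_antisymm (le_trans h0 h2) bot_le
  -- (v)
  have h5 : ∀ a : L, neg a ≤ neg (neg (dia (neg a))) := by
    intro a
    apply hnegI
    have h := inf_le_inf_right (neg a) (h1 (neg a))
    rw [inf_comm (neg (neg a))] at h
    exact le_antisymm (le_trans h (hnegE (neg a)).le) bot_le
  intro a
  refine ⟨h1 a, ?_, ?_, ?_, h5 a⟩
  · -- dia a ≤ dia (dia a)
    apply hdiaE
    apply le_antisymm le_top
    rw [← hdiaI (dia a)]
    exact sup_le_sup_right (h1 a) _
  · -- dia (neg (dia a)) ≤ neg a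
    apply hdiaE
    apply le_antisymm le_top
    rw [← hdiaI a]
    exact sup_le le_sup_right (le_trans (dni (dia a)) le_sup_left)
  · -- dia (neg (dia (neg a))) ≤ dia a
    apply hdiaE
    apply le_antisymm le_top
    rw [← hdiaI a]
    exact sup_le (le_trans (h5 a) le_sup_left) le_sup_right
end

section
/- Let L be a meet-complemented lattice with a possibility operator ◇. Then for all a, b in L: (i) ◇¬(a ⊓ b) = ◇(¬a ⊔ ¬b); (ii) ◇a = 0 if and only if a = 0; (iii) ◇1 = 1; (iv) ¬◇0 = 1. -/
/-- Interaction of ◇ with ⊓, ⊔, ¬, ⊥, ⊤. -/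
theorem stmt_9 {L : Type*} [Lattice L] [BoundedOrder L]
    (neg : L → L)
    (hnegE : ∀ a : L, a ⊓ neg a = ⊥)
    (hnegI : ∀ a b : L, a ⊓ b = ⊥ → b ≤ neg a)
    (dia : L → L)
    (hdiaI : ∀ a : L, neg a ⊔ dia a = ⊤)
    (hdiaE : ∀ a b : L, neg a ⊔ b = ⊤ → dia a ≤ b) :
    (∀ a b : L, dia (neg (a ⊓ b)) = dia (neg a ⊔ neg b)) ∧
    (∀ a : L, dia a = ⊥ ↔ a = ⊥) ∧
    (dia (⊤ : L) = ⊤) ∧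
    (neg (dia (⊥ : L)) = ⊤) := by
  have hle : ∀ x y : L, x ⊓ y = ⊥ → x ≤ neg y := by
    intro x y h
    exact hnegI y x (by rwa [inf_comm])
  have hinf : ∀ x y : L, x ≤ neg y → x ⊓ y = ⊥ := by
    intro x y h
    have h1 : x ⊓ y ≤ neg y ⊓ y := inf_le_inf_right y h
    rw [inf_comm (neg y) y] at h1
    exact le_bot_iff.mp (h1.trans (le_of_eq (hnegE y)))
  have hanti : ∀ x y : L, x ≤ y → neg y ≤ neg x := by
    intro x y h
    refine hle _ _ ?_
    have h1 : neg y ⊓ x ≤ neg y ⊓ y := inf_le_inf_left _ h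
    rw [inf_comm (neg y) y] at h1
    exact le_bot_iff.mp (h1.trans (le_of_eq (hnegE y)))
  have hdn : ∀ x : L, x ≤ neg (neg x) := fun x => hle _ _ (hnegE x)
  have hcong : ∀ x y : L, neg x = neg y → dia x = dia y := by
    intro x y h
    apply le_antisymm
    · exact hdiaE _ _ (by rw [h]; exact hdiaI y)
    · exact hdiaE _ _ (by rw [← h]; exact hdiaI x)
  -- key: ¬¬(a⊓b) = ¬(¬a⊔¬b)
  have hkey : ∀ a b : L, neg (neg (a ⊓ b)) = neg (neg a ⊔ neg b) := by
    intro a b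
    apply le_antisymm
    · exact hanti _ _ (sup_le (hanti _ _ inf_le_left) (hanti _ _ inf_le_right))
    · set c := neg (neg a ⊔ neg b) with hc
      refine hle _ _ ?_
      set d := c ⊓ neg (a ⊓ b) with hd
      have hcab : c ⊓ (neg a ⊔ neg b) = ⊥ := hinf _ _ le_rfl
      have hda : d ≤ neg (neg a) := by
        refine hle _ _ ?_
        have : d ⊓ neg a ≤ c ⊓ (neg a ⊔ neg b) := inf_le_inf inf_le_left le_sup_left
        exact le_bot_iff.mp (hcab ▸ this)
      have hdb : d ≤ neg (neg b) := by
        refine hle _ _ ?_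
        have : d ⊓ neg b ≤ c ⊓ (neg a ⊔ neg b) := inf_le_inf inf_le_left le_sup_right
        exact le_bot_iff.mp (hcab ▸ this)
      have hdab : d ⊓ (a ⊓ b) = ⊥ := hinf _ _ inf_le_right
      have hda2 : d ⊓ a ≤ neg b := hle _ _ (by rw [inf_assoc]; exact hdab)
      have hda0 : d ⊓ a = ⊥ := by
        have h1 : d ⊓ a ≤ neg b ⊓ neg (neg b) :=
          le_inf hda2 (le_trans inf_le_left hdb)
        exact le_bot_iff.mp (h1.trans (le_of_eq (hnegE (neg b))))
      have hd0 : d = ⊥ := by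
        have h1 : d ≤ neg a := hle _ _ hda0
        have h2 : d ≤ neg a ⊓ neg (neg a) := le_inf h1 hda
        exact le_bot_iff.mp (h2.trans (le_of_eq (hnegE (neg a))))
      exact hd0
  have hnegbot : neg (⊥ : L) = ⊤ :=
    top_le_iff.mp (hle ⊤ ⊥ (by simp))
  have hdiabot : dia (⊥ : L) = ⊥ := by
    have := hdiaE ⊥ ⊥ (by rw [hnegbot]; simp)
    exact le_bot_iff.mp this
  refine ⟨fun a b => hcong _ _ (hkey a b), ?_, ?_, ?_⟩
  · intro a
    constructor
    · intro h
      have h1 := hdiaI a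
      rw [h, sup_bot_eq] at h1
      have : a ⊓ neg a = a := by rw [h1, inf_top_eq]
      rw [hnegE a] at this
      exact this.symm
    · intro h; rw [h]; exact hdiabot
  · have hnegtop : neg (⊤ : L) = ⊥ := by
      have := hnegE (⊤ : L)
      rwa [top_inf_eq] at this
    have h1 := hdiaI (⊤ : L)
    rwa [hnegtop, bot_sup_eq] at h1
  · rw [hdiabot]; exact hnegbot
end

section
/- Let L be a meet-complemented lattice with a possibility operator ◇ and let a be an element of L. Then a is Boolean (i.e. a ⊔ ¬a = 1) if and only if ◇a ≤ a. -/
/-- a is Boolean iff ◇a ≤ a. -/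
theorem stmt_10 {L : Type*} [Lattice L] [BoundedOrder L]
    (neg : L → L)
    (hnegE : ∀ a : L, a ⊓ neg a = ⊥)
    (hnegI : ∀ a b : L, a ⊓ b = ⊥ → b ≤ neg a)
    (dia : L → L)
    (hdiaI : ∀ a : L, neg a ⊔ dia a = ⊤)
    (hdiaE : ∀ a b : L, neg a ⊔ b = ⊤ → dia a ≤ b)
    (a : L) :
    a ⊔ neg a = ⊤ ↔ dia a ≤ a := by
  constructor
  · intro h
    exact hdiaE a a (by rw [sup_comm]; exact h)
  · intro h
    have := hdiaI a
    rw [sup_comm]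
    exact top_le_iff.mp (this ▸ sup_le_sup_left h _)
end

section
/- Let L be a meet-complemented lattice with both a necessity operator □ and a possibility operator ◇. Then for all a, b in L: (B1) a ≤ □◇a; (B2) ◇□a ≤ a; (A, adjunction) ◇a ≤ b if and only if a ≤ □b; moreover ◇□◇a = ◇a and □◇□a = □a. -/
/-- Brouwerian properties and the adjunction between ◇ and □. -/
theorem stmt_11 {L : Type*} [Lattice L] [BoundedOrder L]
    (neg : L → L)
    (hnegE : ∀ a : L, a ⊓ neg a = ⊥)
    (hnegI : ∀ a b : L, a ⊓ b = ⊥ → b ≤ neg a)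
    (box : L → L)
    (hboxE : ∀ a : L, a ⊔ neg (box a) = ⊤)
    (hboxI : ∀ a b : L, a ⊔ neg b = ⊤ → b ≤ box a)
    (dia : L → L)
    (hdiaI : ∀ a : L, neg a ⊔ dia a = ⊤)
    (hdiaE : ∀ a b : L, neg a ⊔ b = ⊤ → dia a ≤ b) :
    (∀ a : L, a ≤ box (dia a)) ∧
    (∀ a : L, dia (box a) ≤ a) ∧
    (∀ a b : L, dia a ≤ b ↔ a ≤ box b) ∧
    (∀ a : L, dia (box (dia a)) = dia a) ∧
    (∀ a : L, box (dia (box a)) = box a) := by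
  have hnegA : ∀ a b : L, a ≤ b → neg b ≤ neg a := by
    intro a b hab
    apply hnegI
    have : a ⊓ neg b ≤ b ⊓ neg b := inf_le_inf_right _ hab
    rw [hnegE] at this
    exact le_bot_iff.mp this
  have hadj : ∀ a b : L, dia a ≤ b ↔ a ≤ box b := by
    intro a b
    constructor
    · intro h
      apply hboxI
      have : ⊤ ≤ b ⊔ neg a := by
        rw [← hdiaI a, sup_comm]
        exact sup_le_sup_right h _
      exact top_le_iff.mp this
    · intro h
      apply hdiaE
      have : ⊤ ≤ neg a ⊔ b := by
        rw [← hboxE b, sup_comm]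
        exact sup_le_sup_right (hnegA a (box b) h) _
      exact top_le_iff.mp this
  have hB1 : ∀ a : L, a ≤ box (dia a) := fun a => (hadj a (dia a)).mp le_rfl
  have hB2 : ∀ a : L, dia (box a) ≤ a := fun a => (hadj (box a) a).mpr le_rfl
  have hdmono : ∀ a b : L, a ≤ b → dia a ≤ dia b := fun a b h =>
    (hadj a (dia b)).mpr (h.trans (hB1 b))
  have hbmono : ∀ a b : L, a ≤ b → box a ≤ box b := fun a b h =>
    (hadj (box a) b).mp ((hB2 a).trans h)
  refine ⟨hB1, hB2, hadj, fun a => le_antisymm ?_ ?_, fun a => le_antisymm ?_ ?_⟩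
  · exact (hadj _ _).mpr le_rfl
  · exact hdmono _ _ (hB1 a)
  · exact hbmono _ _ (hB2 a)
  · exact (hadj _ _).mp le_rfl
end

section
/- Let L be a meet-complemented lattice with both a necessity operator □ and a possibility operator ◇. Then for every a in L: (i) ◇a ≤ ¬□¬a; (ii) ¬◇a = □¬a; (iii) ¬¬◇a = ¬□¬a; (iv) □¬¬a = ¬◇¬a; (v) ◇¬a ≤ ¬□a; (vi) □a ≤ ¬◇¬a; (vii) ¬◇¬a ≤ □◇a; (viii) □◇a ≤ ¬□¬a; (ix) ◇¬□¬a = ◇◇a. -/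
/-- Facts involving negation, □ and ◇ together. -/
theorem stmt_12 {L : Type*} [Lattice L] [BoundedOrder L]
    (neg : L → L)
    (hnegE : ∀ a : L, a ⊓ neg a = ⊥)
    (hnegI : ∀ a b : L, a ⊓ b = ⊥ → b ≤ neg a)
    (box : L → L)
    (hboxE : ∀ a : L, a ⊔ neg (box a) = ⊤)
    (hboxI : ∀ a b : L, a ⊔ neg b = ⊤ → b ≤ box a)
    (dia : L → L)
    (hdiaI : ∀ a : L, neg a ⊔ dia a = ⊤)
    (hdiaE : ∀ a b : L, neg a ⊔ b = ⊤ → dia a ≤ b) :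
    ∀ a : L,
      (dia a ≤ neg (box (neg a))) ∧
      (neg (dia a) = box (neg a)) ∧
      (neg (neg (dia a)) = neg (box (neg a))) ∧
      (box (neg (neg a)) = neg (dia (neg a))) ∧
      (dia (neg a) ≤ neg (box a)) ∧
      (box a ≤ neg (dia (neg a))) ∧
      (neg (dia (neg a)) ≤ box (dia a)) ∧
      (box (dia a) ≤ neg (box (neg a))) ∧
      (dia (neg (box (neg a))) = dia (dia a)) := by
  -- double negation introduction
  have dne : ∀ x : L, x ≤ neg (neg x) := fun x =>
    hnegI _ _ (by rw [inf_comm]; exact hnegE x)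
  -- key lemma: if x ⊔ y = ⊤ then ¬x ⊓ ¬y = ⊥
  have negE' : ∀ x : L, neg x ⊓ x = ⊥ := fun x => by
    rw [inf_comm]; exact hnegE x
  have key : ∀ x y : L, x ⊔ y = ⊤ → neg x ⊓ neg y = ⊥ := by
    intro x y h
    set t := neg x ⊓ neg y with ht
    have hx : x ≤ neg t := by
      apply hnegI
      exact le_antisymm (le_trans (inf_le_inf_right x inf_le_left)
        (le_of_eq (negE' x))) bot_le
    have hy : y ≤ neg t := by
      apply hnegI
      exact le_antisymm (le_trans (inf_le_inf_right y inf_le_right)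
        (le_of_eq (negE' y))) bot_le
    have htop : neg t = ⊤ := le_antisymm le_top (h ▸ sup_le hx hy)
    calc t = t ⊓ neg t := by rw [htop, inf_top_eq]
      _ = ⊥ := hnegE t
  -- part (i), as a ∀ lemma
  have lem1 : ∀ a : L, dia a ≤ neg (box (neg a)) := fun a =>
    hdiaE a _ (hboxE (neg a))
  -- part (ii), as a ∀ lemma
  have lem2 : ∀ a : L, neg (dia a) = box (neg a) := by
    intro a
    apply le_antisymm
    · apply hboxI
      apply le_antisymm le_top
      calc (⊤ : L) = neg a ⊔ dia a := (hdiaI a).symm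
        _ ≤ neg a ⊔ neg (neg (dia a)) := sup_le_sup_left (dne _) _
    · apply hnegI
      exact le_antisymm (le_trans (inf_le_inf_right _ (lem1 a))
        (le_of_eq (by rw [inf_comm]; exact hnegE (box (neg a))))) bot_le
  -- part (v), as a ∀ lemma
  have lem5 : ∀ a : L, dia (neg a) ≤ neg (box a) := by
    intro a
    apply hdiaE
    apply le_antisymm le_top
    calc (⊤ : L) = a ⊔ neg (box a) := (hboxE a).symm
      _ ≤ neg (neg a) ⊔ neg (box a) := sup_le_sup_right (dne a) _
  -- box x ≤ ¬¬x
  have boxnn : ∀ x : L, box x ≤ neg (neg x) := by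
    intro x
    apply hnegI
    have h1 := key x (neg (box x)) (hboxE x)
    apply le_antisymm _ bot_le
    calc neg x ⊓ box x ≤ neg x ⊓ neg (neg (box x)) :=
          inf_le_inf_left _ (dne _)
      _ ≤ ⊥ := le_of_eq h1
  -- ◇ is monotone
  have diamono : ∀ x y : L, x ≤ y → dia x ≤ dia y := by
    intro x y h
    apply hdiaE
    apply le_antisymm le_top
    have hxy : neg y ≤ neg x := hnegI _ _ (le_antisymm
      (le_trans (inf_le_inf_right _ h) (le_of_eq (hnegE y))) bot_le)
    calc (⊤ : L) = neg y ⊔ dia y := (hdiaI y).symm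
      _ ≤ neg x ⊔ dia y := sup_le_sup_right hxy _
  -- ◇¬¬x = ◇x
  have dnn : ∀ x : L, dia (neg (neg x)) = dia x := by
    intro x
    apply le_antisymm
    · apply hdiaE
      apply le_antisymm le_top
      calc (⊤ : L) = neg x ⊔ dia x := (hdiaI x).symm
        _ ≤ neg (neg (neg x)) ⊔ dia x := sup_le_sup_right (dne _) _
    · exact diamono _ _ (dne x)
  intro a
  refine ⟨lem1 a, lem2 a, by rw [lem2 a], (lem2 (neg a)).symm, lem5 a, ?_, ?_, ?_, ?_⟩
  · -- (vi)
    apply hnegI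
    exact le_antisymm (le_trans (inf_le_inf_right _ (lem5 a))
      (le_of_eq (by rw [inf_comm]; exact hnegE (box a)))) bot_le
  · -- (vii)
    apply hboxI
    have h1 : neg (neg (neg a)) ⊓ neg (dia (neg a)) = ⊥ :=
      key _ _ (hdiaI (neg a))
    have h2 : neg a ≤ neg (neg (dia (neg a))) := by
      apply hnegI
      rw [inf_comm]
      exact le_antisymm (le_trans (inf_le_inf_right _ (dne (neg a))) (le_of_eq h1)) bot_le
    apply le_antisymm le_top
    calc (⊤ : L) = neg a ⊔ dia a := (hdiaI a).symm
      _ ≤ neg (neg (dia (neg a))) ⊔ dia a := sup_le_sup_right h2 _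
      _ = dia a ⊔ neg (neg (dia (neg a))) := sup_comm _ _
  · -- (viii)
    calc box (dia a) ≤ neg (neg (dia a)) := boxnn _
      _ = neg (box (neg a)) := by rw [lem2 a]
  · -- (ix)
    have : neg (box (neg a)) = neg (neg (dia a)) := by rw [lem2 a]
    rw [this, dnn]
end

section
/- Let L be a meet-complemented lattice with both a necessity operator □ and a possibility operator ◇, and let S be a subset of L. (i) If g is the greatest lower bound of S and h is the greatest lower bound of the image {□s : s ∈ S}, then h = □g. (ii) If g is the least upper bound of S and h is the least upper bound of {◇s : s ∈ S}, then h = ◇g. In particular, □(a ⊓ b) = □a ⊓ □b and ◇(a ⊔ b) = ◇a ⊔ ◇b for all a, b. -/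
/-- □ preserves existing infima and ◇ preserves existing suprema. -/
theorem stmt_13 {L : Type*} [Lattice L] [BoundedOrder L]
    (neg : L → L)
    (hnegE : ∀ a : L, a ⊓ neg a = ⊥)
    (hnegI : ∀ a b : L, a ⊓ b = ⊥ → b ≤ neg a)
    (box : L → L)
    (hboxE : ∀ a : L, a ⊔ neg (box a) = ⊤)
    (hboxI : ∀ a b : L, a ⊔ neg b = ⊤ → b ≤ box a)
    (dia : L → L)
    (hdiaI : ∀ a : L, neg a ⊔ dia a = ⊤)
    (hdiaE : ∀ a b : L, neg a ⊔ b = ⊤ → dia a ≤ b) :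
    (∀ (S : Set L) (g h : L), IsGLB S g → IsGLB (box '' S) h → h = box g) ∧
    (∀ (S : Set L) (g h : L), IsLUB S g → IsLUB (dia '' S) h → h = dia g) ∧
    (∀ a b : L, box (a ⊓ b) = box a ⊓ box b) ∧
    (∀ a b : L, dia (a ⊔ b) = dia a ⊔ dia b) := by
  -- negation is antitone
  have hanti : ∀ x y : L, x ≤ y → neg y ≤ neg x := by
    intro x y hxy
    apply hnegI
    exact le_bot_iff.mp ((inf_le_inf_right _ hxy).trans (hnegE y).le)
  -- Galois connection: dia ⊣ box
  have gc : ∀ x a : L, dia x ≤ a ↔ x ≤ box a := by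
    intro x a
    constructor
    · intro hd
      apply hboxI
      rw [sup_comm]
      exact top_le_iff.mp ((hdiaI x).symm.le.trans (sup_le_sup_left hd _))
    · intro hb
      apply hdiaE
      rw [sup_comm]
      exact top_le_iff.mp ((hboxE a).symm.le.trans (sup_le_sup_left (hanti _ _ hb) _))
  have boxmono : ∀ x y : L, x ≤ y → box x ≤ box y := by
    intro x y hxy
    exact (gc _ _).mp (((gc (box x) x).mpr le_rfl).trans hxy)
  have diamono : ∀ x y : L, x ≤ y → dia x ≤ dia y := by
    intro x y hxy
    exact (gc _ _).mpr (hxy.trans ((gc y (dia y)).mp le_rfl))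
  have hglb : ∀ (S : Set L) (g h : L), IsGLB S g → IsGLB (box '' S) h → h = box g := by
    intro S g h hg hh
    apply le_antisymm
    · rw [← gc]
      apply hg.2
      intro s hs
      rw [gc]
      exact hh.1 ⟨s, hs, rfl⟩
    · apply hh.2
      rintro _ ⟨s, hs, rfl⟩
      exact boxmono _ _ (hg.1 hs)
  have hlub : ∀ (S : Set L) (g h : L), IsLUB S g → IsLUB (dia '' S) h → h = dia g := by
    intro S g h hg hh
    apply le_antisymm
    · apply hh.2
      rintro _ ⟨s, hs, rfl⟩
      exact diamono _ _ (hg.1 hs)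
    · rw [gc]
      apply hg.2
      intro s hs
      rw [← gc]
      exact hh.1 ⟨s, hs, rfl⟩
  refine ⟨hglb, hlub, ?_, ?_⟩
  · intro a b
    exact (hglb {a, b} (a ⊓ b) (box a ⊓ box b) isGLB_pair
      (by rw [Set.image_pair]; exact isGLB_pair)).symm
  · intro a b
    exact (hlub {a, b} (a ⊔ b) (dia a ⊔ dia b) isLUB_pair
      (by rw [Set.image_pair]; exact isLUB_pair)).symm
end

section
/- Let L be a finite distributive meet-complemented lattice. Then for every a in L, the set {b ∈ L : a ⊔ ¬b = 1} has a greatest element (so the necessity □a exists), and the set {b ∈ L : ¬a ⊔ b = 1} has a least element (so the possibility ◇a exists). -/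
/-- In a finite distributive meet-complemented lattice, □ and ◇ exist. -/
theorem stmt_14 {L : Type*} [DistribLattice L] [BoundedOrder L] [Finite L]
    (neg : L → L)
    (hnegE : ∀ a : L, a ⊓ neg a = ⊥)
    (hnegI : ∀ a b : L, a ⊓ b = ⊥ → b ≤ neg a) :
    ∀ a : L,
      (∃ m : L, IsGreatest {b : L | a ⊔ neg b = ⊤} m) ∧
      (∃ m : L, IsLeast {b : L | neg a ⊔ b = ⊤} m) := by
  intro a
  have := Fintype.ofFinite L
  classical
  constructor
  · -- box
    set S : Set L := {b : L | a ⊔ neg b = ⊤} with hS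
    have hbot : (⊥ : L) ∈ S := by
      have h1 : (⊤ : L) ≤ neg ⊥ := hnegI ⊥ ⊤ (by simp)
      simp [S, top_le_iff.mp h1]
    have hfin : S.Finite := Set.toFinite S
    have hne : hfin.toFinset.Nonempty := ⟨⊥, hfin.mem_toFinset.mpr hbot⟩
    have hclosed : ∀ x ∈ S, ∀ y ∈ S, x ⊔ y ∈ S := by
      intro x hx y hy
      have hdis : (x ⊔ y) ⊓ (neg x ⊓ neg y) = ⊥ := by
        rw [inf_comm, inf_sup_left]
        have h1 : neg x ⊓ neg y ⊓ x = ⊥ := by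
          rw [inf_right_comm, inf_comm (neg x) x, hnegE x]; simp
        have h2 : neg x ⊓ neg y ⊓ y = ⊥ := by
          rw [inf_assoc, inf_comm (neg y) y, hnegE y]; simp
        rw [h1, h2, bot_sup_eq]
      have hle : neg x ⊓ neg y ≤ neg (x ⊔ y) := hnegI _ _ hdis
      have : (⊤ : L) ≤ a ⊔ neg (x ⊔ y) := by
        calc (⊤ : L) = (a ⊔ neg x) ⊓ (a ⊔ neg y) := by rw [hx, hy]; simp
        _ = a ⊔ (neg x ⊓ neg y) := (sup_inf_left a _ _).symm
        _ ≤ a ⊔ neg (x ⊔ y) := sup_le_sup_left hle a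
      exact top_le_iff.mp this
    refine ⟨hfin.toFinset.sup' hne id, ?_, ?_⟩
    · have := Finset.sup'_mem S hclosed hfin.toFinset hne id
        (fun b hb => hfin.mem_toFinset.mp hb)
      exact this
    · intro b hb
      exact Finset.le_sup' id (hfin.mem_toFinset.mpr hb)
  · -- diamond
    set S : Set L := {b : L | neg a ⊔ b = ⊤} with hS
    have htop : (⊤ : L) ∈ S := by simp [S]
    have hfin : S.Finite := Set.toFinite S
    have hne : hfin.toFinset.Nonempty := ⟨⊤, hfin.mem_toFinset.mpr htop⟩
    have hclosed : ∀ x ∈ S, ∀ y ∈ S, x ⊓ y ∈ S := by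
      intro x hx y hy
      have : neg a ⊔ (x ⊓ y) = (neg a ⊔ x) ⊓ (neg a ⊔ y) := sup_inf_left _ _ _
      simp only [S, Set.mem_setOf_eq] at hx hy ⊢
      rw [this, hx, hy, top_inf_eq]
    refine ⟨hfin.toFinset.inf' hne id, ?_, ?_⟩
    · exact Finset.inf'_mem S hclosed hfin.toFinset hne id
        (fun b hb => hfin.mem_toFinset.mp hb)
    · intro b hb
      exact Finset.inf'_le id (hfin.mem_toFinset.mpr hb)
end

section
/- Let L be a distributive meet-complemented lattice with both a necessity operator □ and a possibility operator ◇. Then for all a, b in L: (D1) ◇a ⊓ □b ≤ ◇(a ⊓ b), and (D2) □(a ⊔ b) ≤ □a ⊔ ◇b. -/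
/-- Dunn's inequalities (D1) and (D2) in the distributive case. -/
theorem stmt_15 {L : Type*} [DistribLattice L] [BoundedOrder L]
    (neg : L → L)
    (hnegE : ∀ a : L, a ⊓ neg a = ⊥)
    (hnegI : ∀ a b : L, a ⊓ b = ⊥ → b ≤ neg a)
    (box : L → L)
    (hboxE : ∀ a : L, a ⊔ neg (box a) = ⊤)
    (hboxI : ∀ a b : L, a ⊔ neg b = ⊤ → b ≤ box a)
    (dia : L → L)
    (hdiaI : ∀ a : L, neg a ⊔ dia a = ⊤)
    (hdiaE : ∀ a b : L, neg a ⊔ b = ⊤ → dia a ≤ b) :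
    (∀ a b : L, dia a ⊓ box b ≤ dia (a ⊓ b)) ∧
    (∀ a b : L, box (a ⊔ b) ≤ box a ⊔ dia b) := by
  have anti : ∀ c d : L, d ≤ c → neg c ≤ neg d := by
    intro c d h
    refine hnegI d (neg c) ?_
    have : d ⊓ neg c ≤ c ⊓ neg c := inf_le_inf_right _ h
    rw [hnegE c] at this
    exact le_bot_iff.mp this
  constructor
  · intro a b
    -- show dia a ≤ neg (box b) ⊔ dia (a ⊓ b)
    have key : dia a ≤ neg (box b) ⊔ dia (a ⊓ b) := by
      apply hdiaE
      -- need neg a ⊔ (neg (box b) ⊔ dia (a ⊓ b)) = ⊤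
      have h1 : (⊤ : L) = (b ⊔ neg (box b)) ⊓ (neg (a ⊓ b) ⊔ dia (a ⊓ b)) := by
        rw [hboxE b, hdiaI (a ⊓ b), top_inf_eq]
      have h2 : b ⊓ neg (a ⊓ b) ≤ neg a := by
        apply hnegI
        have : a ⊓ (b ⊓ neg (a ⊓ b)) = (a ⊓ b) ⊓ neg (a ⊓ b) := by
          rw [inf_assoc]
        rw [this, hnegE]
      have h3 : (b ⊔ neg (box b)) ⊓ (neg (a ⊓ b) ⊔ dia (a ⊓ b))
          ≤ neg a ⊔ (neg (box b) ⊔ dia (a ⊓ b)) := by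
        rw [inf_sup_left, inf_sup_right, inf_sup_right]
        refine sup_le (sup_le ?_ ?_) (sup_le ?_ ?_)
        · exact le_sup_of_le_left h2
        · exact le_sup_of_le_right (le_sup_of_le_left inf_le_left)
        · exact le_sup_of_le_right (le_sup_of_le_right inf_le_right)
        · exact le_sup_of_le_right (le_sup_of_le_right inf_le_right)
      exact top_le_iff.mp (h1 ▸ h3)
    calc dia a ⊓ box b ≤ (neg (box b) ⊔ dia (a ⊓ b)) ⊓ box b :=
          inf_le_inf_right _ key
      _ = (neg (box b) ⊓ box b) ⊔ (dia (a ⊓ b) ⊓ box b) := by rw [inf_sup_right]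
      _ ≤ dia (a ⊓ b) := by
          refine sup_le ?_ inf_le_left
          rw [inf_comm, hnegE]
          exact bot_le
  · intro a b
    set c := box (a ⊔ b) with hc
    have hb : c ⊓ neg b ≤ box a := by
      apply hboxI
      -- show a ⊔ neg (c ⊓ neg b) = ⊤
      have h1 : b ≤ neg (c ⊓ neg b) := by
        apply hnegI
        have : (c ⊓ neg b) ⊓ b ≤ b ⊓ neg b := by
          refine le_inf inf_le_right (inf_le_of_left_le inf_le_right)
        rw [hnegE b] at this
        exact le_bot_iff.mp this
      have h2 : neg c ≤ neg (c ⊓ neg b) := anti _ _ inf_le_left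
      have : (⊤ : L) = (a ⊔ b) ⊔ neg c := (hboxE (a ⊔ b)).symm
      rw [top_le_iff.symm, this, sup_assoc]
      exact sup_le le_sup_left (le_sup_of_le_right (sup_le h1 h2))
    calc c = c ⊓ (neg b ⊔ dia b) := by rw [hdiaI b, inf_top_eq]
      _ = (c ⊓ neg b) ⊔ (c ⊓ dia b) := by rw [inf_sup_left]
      _ ≤ box a ⊔ dia b := sup_le (le_sup_of_le_left hb) (le_sup_of_le_right inf_le_right)
end

section
/- Let L be a meet-complemented lattice with both a necessity operator □ and a possibility operator ◇, and let a be an element of L. Then the following are equivalent: (i) ◇□a ≤ □a; (ii) □a ≤ □□a; (iii) □a ⊔ ¬□a = 1; (iv) □□a = □a. Dually, the following are equivalent: (i') ◇a ≤ □◇a; (ii') ◇◇a ≤ ◇a; (iii') ◇a ⊔ ¬◇a = 1; (iv') ◇◇a = ◇a. Moreover, (∀a, ◇□a ≤ □a) holds if and only if (∀a, ◇a ≤ □◇a) holds. -/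
/-- Equivalent formulations of the S4-schema, elementwise and globally. -/
theorem stmt_16 {L : Type*} [Lattice L] [BoundedOrder L]
    (neg : L → L)
    (hnegE : ∀ a : L, a ⊓ neg a = ⊥)
    (hnegI : ∀ a b : L, a ⊓ b = ⊥ → b ≤ neg a)
    (box : L → L)
    (hboxE : ∀ a : L, a ⊔ neg (box a) = ⊤)
    (hboxI : ∀ a b : L, a ⊔ neg b = ⊤ → b ≤ box a)
    (dia : L → L)
    (hdiaI : ∀ a : L, neg a ⊔ dia a = ⊤)
    (hdiaE : ∀ a b : L, neg a ⊔ b = ⊤ → dia a ≤ b) :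
    (∀ a : L,
      ((dia (box a) ≤ box a) ↔ (box a ≤ box (box a))) ∧
      ((box a ≤ box (box a)) ↔ (box a ⊔ neg (box a) = ⊤)) ∧
      ((box a ⊔ neg (box a) = ⊤) ↔ (box (box a) = box a))) ∧
    (∀ a : L,
      ((dia a ≤ box (dia a)) ↔ (dia (dia a) ≤ dia a)) ∧
      ((dia (dia a) ≤ dia a) ↔ (dia a ⊔ neg (dia a) = ⊤)) ∧
      ((dia a ⊔ neg (dia a) = ⊤) ↔ (dia (dia a) = dia a))) ∧
    ((∀ a : L, dia (box a) ≤ box a) ↔ (∀ a : L, dia a ≤ box (dia a))) := by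
  -- negation is antitone
  have negA : ∀ x y : L, x ≤ y → neg y ≤ neg x := by
    intro x y h
    refine hnegI x (neg y) (le_antisymm ?_ bot_le)
    calc x ⊓ neg y ≤ y ⊓ neg y := inf_le_inf_right _ h
      _ = ⊥ := hnegE y
  -- double negation introduction
  have dbl : ∀ x : L, x ≤ neg (neg x) := by
    intro x
    exact hnegI (neg x) x (by rw [inf_comm]; exact hnegE x)
  -- if neg m = ⊤ then m = ⊥
  have negtop : ∀ m : L, neg m = ⊤ → m = ⊥ := by
    intro m h
    have := hnegE m
    rwa [h, inf_top_eq] at this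
  -- box is monotone
  have box_mono : ∀ x y : L, x ≤ y → box x ≤ box y := by
    intro x y h
    refine hboxI y (box x) (top_unique ?_)
    rw [← hboxE x]
    exact sup_le_sup_right h _
  -- dia is monotone
  have dia_mono : ∀ x y : L, x ≤ y → dia x ≤ dia y := by
    intro x y h
    refine hdiaE x (dia y) (top_unique ?_)
    rw [← hdiaI y]
    exact sup_le_sup_right (negA x y h) _
  -- dia (box x) ≤ x
  have diabox : ∀ x : L, dia (box x) ≤ x := by
    intro x
    exact hdiaE (box x) x (by rw [sup_comm]; exact hboxE x)
  -- x ≤ box (dia x)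
  have boxdia : ∀ x : L, x ≤ box (dia x) := by
    intro x
    exact hboxI (dia x) x (by rw [sup_comm]; exact hdiaI x)
  -- box (box x) ≤ box x, unconditionally
  have boxbox_le : ∀ x : L, box (box x) ≤ box x := by
    intro x
    have T : box x ⊔ neg (box (box x)) = ⊤ := by
      refine top_unique ?_
      rw [← hdiaI (box (box x))]
      exact sup_le le_sup_right ((diabox (box x)).trans le_sup_left)
    have hm : box (box x) ⊓ neg (box x) = ⊥ := by
      refine negtop _ (top_unique ?_)
      rw [← T]
      refine sup_le ?_ ?_
      · exact (dbl (box x)).trans (negA _ _ inf_le_right)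
      · exact negA _ _ inf_le_left
    have h3 : neg (box x) ≤ neg (box (box x)) :=
      hnegI (box (box x)) (neg (box x)) hm
    refine hboxI x (box (box x)) (top_unique ?_)
    rw [← hboxE x]
    exact sup_le_sup_left h3 _
  -- dia x ≤ dia (dia x), unconditionally
  have le_diadia : ∀ x : L, dia x ≤ dia (dia x) := by
    intro x
    have hm : x ⊓ neg (dia x) = ⊥ := by
      refine negtop _ (top_unique ?_)
      rw [← hdiaI x]
      refine sup_le ?_ ?_
      · exact negA _ _ inf_le_left
      · exact (dbl (dia x)).trans (negA _ _ inf_le_right)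
    have h3 : neg (dia x) ≤ neg x := hnegI x (neg (dia x)) hm
    refine hdiaE x (dia (dia x)) (top_unique ?_)
    rw [← hdiaI (dia x)]
    exact sup_le_sup_right h3 _
  refine ⟨fun a => ?_, fun a => ?_, ?_⟩
  · -- box side
    have e13 : dia (box a) ≤ box a ↔ box a ⊔ neg (box a) = ⊤ := by
      constructor
      · intro h
        refine top_unique ?_
        rw [← hdiaI (box a)]
        exact sup_le le_sup_right (h.trans le_sup_left)
      · intro h
        exact hdiaE (box a) (box a) (by rw [sup_comm]; exact h)
    have e23 : box a ≤ box (box a) ↔ box a ⊔ neg (box a) = ⊤ := by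
      constructor
      · intro h
        refine top_unique ?_
        rw [← hboxE (box a)]
        exact sup_le_sup_left (negA _ _ h) _
      · intro h
        exact hboxI (box a) (box a) h
    refine ⟨e13.trans e23.symm, e23, ?_⟩
    constructor
    · intro h
      exact le_antisymm (boxbox_le a) (hboxI (box a) (box a) h)
    · intro h
      have := hboxE (box a)
      rwa [h] at this
  · -- dia side
    have e13 : dia a ≤ box (dia a) ↔ dia a ⊔ neg (dia a) = ⊤ := by
      constructor
      · intro h
        refine top_unique ?_
        rw [← hboxE (dia a)]
        exact sup_le_sup_left (negA _ _ h) _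
      · intro h
        exact hboxI (dia a) (dia a) h
    have e23 : dia (dia a) ≤ dia a ↔ dia a ⊔ neg (dia a) = ⊤ := by
      constructor
      · intro h
        refine top_unique ?_
        rw [← hdiaI (dia a)]
        rw [sup_comm (dia a) (neg (dia a))]
        exact sup_le_sup_left h _
      · intro h
        exact hdiaE (dia a) (dia a) (by rw [sup_comm]; exact h)
    refine ⟨e13.trans e23.symm, e23, ?_⟩
    constructor
    · intro h
      exact le_antisymm (hdiaE (dia a) (dia a) (by rw [sup_comm]; exact h))
        (le_diadia a)
    · intro h
      have := hdiaI (dia a)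
      rw [h] at this
      rwa [sup_comm] at this
  · -- global equivalence
    constructor
    · intro H a
      exact (dia_mono _ _ (boxdia a)).trans (H (dia a))
    · intro H a
      exact (H (box a)).trans (box_mono _ _ (diabox a))
end

section
/- Let L be a meet-complemented lattice with both a necessity operator □ and a possibility operator ◇ satisfying the S4-schema (S): □a ≤ □□a for all a. Then for every a in L: (i) ◇¬□a ≤ ¬□a; (ii) □¬□a = ¬□a; (iii) □◇¬□a = ¬□a; (iv) ¬□¬a = □◇a; (v) ¬□◇a = □¬a. -/
/-- Modal identities in the S-extension (not necessarily distributive). -/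
theorem stmt_17 {L : Type*} [Lattice L] [BoundedOrder L]
    (neg : L → L)
    (hnegE : ∀ a : L, a ⊓ neg a = ⊥)
    (hnegI : ∀ a b : L, a ⊓ b = ⊥ → b ≤ neg a)
    (box : L → L)
    (hboxE : ∀ a : L, a ⊔ neg (box a) = ⊤)
    (hboxI : ∀ a b : L, a ⊔ neg b = ⊤ → b ≤ box a)
    (dia : L → L)
    (hdiaI : ∀ a : L, neg a ⊔ dia a = ⊤)
    (hdiaE : ∀ a b : L, neg a ⊔ b = ⊤ → dia a ≤ b)
    (hS : ∀ a : L, box a ≤ box (box a)) :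
    ∀ a : L,
      (dia (neg (box a)) ≤ neg (box a)) ∧
      (box (neg (box a)) = neg (box a)) ∧
      (box (dia (neg (box a))) = neg (box a)) ∧
      (neg (box (neg a)) = box (dia a)) ∧
      (neg (box (dia a)) = box (neg a)) := by
  have nbot : ∀ a b : L, a ⊓ b = ⊥ → b ⊓ a = ⊥ := fun a b h => by rwa [inf_comm] at h
  have lneg : ∀ a b : L, a ≤ b → neg b ≤ neg a := fun a b h =>
    hnegI a (neg b) (le_bot_iff.mp ((inf_le_inf_right _ h).trans (hnegE b).le))
  have dneg : ∀ a : L, a ≤ neg (neg a) := fun a => hnegI (neg a) a (nbot _ _ (hnegE a))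
  have tneg : ∀ a : L, neg (neg (neg a)) = neg a := fun a =>
    le_antisymm (lneg _ _ (dneg a)) (dneg (neg a))
  have bmono : ∀ a b : L, a ≤ b → box a ≤ box b := fun a b h =>
    hboxI b (box a) (top_le_iff.mp ((hboxE a).symm.trans_le (sup_le_sup_right h _)))
  have nnbox : ∀ a : L, neg (neg (box a)) = box a := fun a =>
    le_antisymm (hboxI a _ (by rw [tneg]; exact hboxE a)) (dneg _)
  have key : ∀ a : L, box a ⊔ neg (box a) = ⊤ := fun a =>
    top_le_iff.mp ((hboxE (box a)).symm.trans_le (sup_le_sup_left (lneg _ _ (hS a)) _))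
  have ztrick : ∀ x y z : L, x ⊔ y = ⊤ → z ⊓ x = ⊥ → z ⊓ y = ⊥ → z = ⊥ := by
    intro x y z hxy hzx hzy
    have hx : x ≤ neg z := hnegI z x hzx
    have hy : y ≤ neg z := hnegI z y hzy
    have htop : z ≤ neg z := le_top.trans (hxy ▸ sup_le hx hy)
    exact le_bot_iff.mp ((le_inf le_rfl htop).trans (hnegE z).le)
  have boxneg : ∀ b : L, box b ⊓ neg b = ⊥ := fun b =>
    ztrick b (neg (box b)) _ (hboxE b)
      (le_bot_iff.mp ((inf_le_inf_right b inf_le_right).trans (nbot _ _ (hnegE b)).le))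
      (le_bot_iff.mp ((inf_le_inf_right _ inf_le_left).trans (hnegE (box b)).le))
  have part2 : ∀ a : L, box (neg (box a)) = neg (box a) := by
    intro a
    refine le_antisymm ?_ ?_
    · have h1 := hnegI (neg (neg (box a))) (box (neg (box a))) (nbot _ _ (boxneg (neg (box a))))
      rwa [tneg] at h1
    · refine hboxI _ _ (top_le_iff.mp ?_)
      calc (⊤ : L) = box a ⊔ neg (box a) := (key a).symm
        _ ≤ neg (neg (box a)) ⊔ neg (box a) := sup_le_sup_right (dneg _) _
        _ = neg (box a) ⊔ neg (neg (box a)) := sup_comm _ _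
  have part1 : ∀ a : L, dia (neg (box a)) ≤ neg (box a) := by
    intro a
    refine hdiaE _ _ (top_le_iff.mp ?_)
    calc (⊤ : L) = box a ⊔ neg (box a) := (key a).symm
      _ ≤ neg (neg (box a)) ⊔ neg (box a) := sup_le_sup_right (dneg _) _
  have part3 : ∀ a : L, box (dia (neg (box a))) = neg (box a) := by
    intro a
    refine le_antisymm ?_ ?_
    · exact (bmono _ _ (part1 a)).trans (part2 a).le
    · exact hboxI _ _ (by rw [sup_comm]; exact hdiaI (neg (box a)))
  have dlnb : ∀ a : L, dia a ≤ neg (box (neg a)) := fun a => hdiaE _ _ (hboxE (neg a))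
  have hd : ∀ a : L, neg (box (dia a)) ≤ box (neg a) := by
    intro a
    have ha : a ≤ box (dia a) := hboxI _ _ (by rw [sup_comm]; exact hdiaI a)
    have hb : neg (box (dia a)) ≤ neg a := lneg _ _ ha
    have hc : neg a ⊔ box (dia a) = ⊤ := by
      rw [sup_comm]
      exact top_le_iff.mp ((key (dia a)).symm.trans_le (sup_le_sup_left hb _))
    exact hboxI _ _ (by rw [nnbox]; exact hc)
  have part4 : ∀ a : L, neg (box (neg a)) = box (dia a) := by
    intro a
    refine le_antisymm ?_ ?_
    · refine hboxI _ _ ?_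
      rw [nnbox]
      exact top_le_iff.mp ((hboxE (dia a)).symm.trans_le (sup_le_sup_left (hd a) _))
    · exact (bmono _ _ (dlnb a)).trans (part2 (neg a)).le
  have part5 : ∀ a : L, neg (box (dia a)) = box (neg a) := by
    intro a
    refine le_antisymm (hd a) ?_
    refine hnegI _ _ (le_bot_iff.mp ?_)
    calc box (dia a) ⊓ box (neg a)
        ≤ neg (box (neg a)) ⊓ box (neg a) := inf_le_inf_right _ (part4 a).ge
      _ = ⊥ := nbot _ _ (hnegE (box (neg a)))
  exact fun a => ⟨part1 a, part2 a, part3 a, part4 a, part5 a⟩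
end

section
/- Let L be a distributive meet-complemented lattice with both a necessity operator □ and a possibility operator ◇ satisfying the S4-schema (S): □a ≤ □□a for all a. Then for all a, b in L: (i) ◇¬□a = ¬□a; (ii) ¬¬◇a ≤ ◇a; (iii) ◇a = ¬□¬a (so ◇ is definable from □ and ¬); moreover (iv) □(a ⊓ ◇b) = □a ⊓ ◇b; (v) ◇(a ⊔ □b) = ◇a ⊔ □b; (vi) □(a ⊔ □b) = □a ⊔ □b; (vii) ◇(a ⊓ ◇b) = ◇a ⊓ ◇b. -/
/-- Modal identities in the distributive S-extension. -/
theorem stmt_18 {L : Type*} [DistribLattice L] [BoundedOrder L]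
    (neg : L → L)
    (hnegE : ∀ a : L, a ⊓ neg a = ⊥)
    (hnegI : ∀ a b : L, a ⊓ b = ⊥ → b ≤ neg a)
    (box : L → L)
    (hboxE : ∀ a : L, a ⊔ neg (box a) = ⊤)
    (hboxI : ∀ a b : L, a ⊔ neg b = ⊤ → b ≤ box a)
    (dia : L → L)
    (hdiaI : ∀ a : L, neg a ⊔ dia a = ⊤)
    (hdiaE : ∀ a b : L, neg a ⊔ b = ⊤ → dia a ≤ b)
    (hS : ∀ a : L, box a ≤ box (box a)) :
    (∀ a : L, dia (neg (box a)) = neg (box a)) ∧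
    (∀ a : L, neg (neg (dia a)) ≤ dia a) ∧
    (∀ a : L, dia a = neg (box (neg a))) ∧
    (∀ a b : L, box (a ⊓ dia b) = box a ⊓ dia b) ∧
    (∀ a b : L, dia (a ⊔ box b) = dia a ⊔ box b) ∧
    (∀ a b : L, box (a ⊔ box b) = box a ⊔ box b) ∧
    (∀ a b : L, dia (a ⊓ dia b) = dia a ⊓ dia b) := by
  -- helper: transfer a top join
  have eqtop : ∀ x y z : L, x ⊔ y = ⊤ → x ≤ z → y ≤ z → z = ⊤ := by
    intro x y z h hx hy
    exact eq_top_iff.mpr (by rw [← h]; exact sup_le hx hy)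
  have eqtop2 : ∀ x1 x2 y : L, x1 ⊔ y = ⊤ → x2 ⊔ y = ⊤ → (x1 ⊓ x2) ⊔ y = ⊤ := by
    intro x1 x2 y h1 h2
    rw [sup_inf_right, h1, h2, top_inf_eq]
  -- neg is antitone
  have negA : ∀ a b : L, a ≤ b → neg b ≤ neg a := by
    intro a b h
    refine hnegI a (neg b) (le_antisymm ?_ bot_le)
    exact le_trans (inf_le_inf_right _ h) (le_of_eq (hnegE b))
  have lnn : ∀ a : L, a ≤ neg (neg a) := by
    intro a
    exact hnegI (neg a) a (by rw [inf_comm]; exact hnegE a)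
  -- box a ≤ a
  have boxle : ∀ a : L, box a ≤ a := by
    intro a
    have h : box a = (box a ⊓ a) ⊔ (box a ⊓ neg (box a)) := by
      rw [← inf_sup_left, hboxE a, inf_top_eq]
    rw [hnegE (box a), sup_bot_eq] at h
    exact h.le.trans inf_le_right
  have boxmono : ∀ a b : L, a ≤ b → box a ≤ box b := by
    intro a b h
    refine hboxI b (box a) (eq_top_iff.mpr ?_)
    rw [← hboxE a]; exact sup_le_sup_right h _
  -- a ≤ dia a
  have ledia : ∀ a : L, a ≤ dia a := by
    intro a
    have h : a = (a ⊓ neg a) ⊔ (a ⊓ dia a) := by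
      rw [← inf_sup_left, hdiaI a, inf_top_eq]
    rw [hnegE a, bot_sup_eq] at h
    exact h.le.trans inf_le_right
  have diamono : ∀ a b : L, a ≤ b → dia a ≤ dia b := by
    intro a b h
    refine hdiaE a (dia b) (eqtop _ _ _ (hdiaI b) (le_sup_of_le_left (negA a b h)) le_sup_right)
  -- box elements are complemented (uses S)
  have boxEM : ∀ a : L, box a ⊔ neg (box a) = ⊤ := by
    intro a
    exact eqtop _ _ _ (hboxE (box a)) le_sup_left
      (le_sup_right.trans' (negA _ _ (hS a)))
  have diabox : ∀ a : L, dia (box a) = box a := by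
    intro a
    refine le_antisymm (hdiaE _ _ ?_) (ledia _)
    exact eqtop _ _ _ (boxEM a) le_sup_right le_sup_left
  have lebd : ∀ a : L, a ≤ box (dia a) := by
    intro a
    exact hboxI (dia a) a (by rw [sup_comm]; exact hdiaI a)
  have dlebd : ∀ a : L, dia a ≤ box (dia a) := by
    intro a
    have := diamono a (box (dia a)) (lebd a)
    rwa [diabox (dia a)] at this
  -- dia elements are complemented
  have diaEM : ∀ a : L, dia a ⊔ neg (dia a) = ⊤ := by
    intro a
    exact eqtop _ _ _ (hboxE (dia a)) le_sup_left
      (le_sup_right.trans' (negA _ _ (dlebd a)))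
  -- double negation on complemented elements
  have nnEM : ∀ x : L, x ⊔ neg x = ⊤ → neg (neg x) ≤ x := by
    intro x h
    have h2 : neg (neg x) = (neg (neg x) ⊓ x) ⊔ (neg (neg x) ⊓ neg x) := by
      rw [← inf_sup_left, h, inf_top_eq]
    have h3 : neg (neg x) ⊓ neg x = ⊥ := by rw [inf_comm]; exact hnegE (neg x)
    rw [h3, sup_bot_eq] at h2
    exact h2.le.trans inf_le_right
  -- neg (dia a) = box (neg a)
  have negdia : ∀ a : L, neg (dia a) = box (neg a) := by
    intro a
    refine le_antisymm ?_ ?_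
    · refine hboxI (neg a) (neg (dia a)) (eqtop _ _ _ (hdiaI a) le_sup_left
        (le_sup_right.trans' ?_))
      exact lnn (dia a)
    · refine hnegI (dia a) (box (neg a)) (le_antisymm ?_ bot_le)
      have hd : dia a ≤ neg (box (neg a)) := hdiaE a _ (hboxE (neg a))
      calc dia a ⊓ box (neg a) ≤ neg (box (neg a)) ⊓ box (neg a) :=
            inf_le_inf_right _ hd
        _ = ⊥ := by rw [inf_comm]; exact hnegE (box (neg a))
  -- de Morgan inequalities
  have dm1 : ∀ x y : L, neg x ⊔ neg y ≤ neg (x ⊓ y) := by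
    intro x y
    refine hnegI (x ⊓ y) _ (le_antisymm ?_ bot_le)
    rw [inf_sup_left]
    refine sup_le ?_ ?_
    · calc x ⊓ y ⊓ neg x ≤ x ⊓ neg x := inf_le_inf_right _ inf_le_left
        _ = ⊥ := hnegE x
    · calc x ⊓ y ⊓ neg y ≤ y ⊓ neg y := inf_le_inf_right _ inf_le_right
        _ = ⊥ := hnegE y
  have dm2 : ∀ x y : L, y ⊔ neg y = ⊤ → neg (x ⊓ y) ≤ neg x ⊔ neg y := by
    intro x y hy
    have h2 : neg (x ⊓ y) = (neg (x ⊓ y) ⊓ y) ⊔ (neg (x ⊓ y) ⊓ neg y) := by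
      rw [← inf_sup_left, hy, inf_top_eq]
    have h3 : neg (x ⊓ y) ⊓ y ≤ neg x := by
      refine hnegI x _ (le_antisymm ?_ bot_le)
      calc x ⊓ (neg (x ⊓ y) ⊓ y) ≤ (x ⊓ y) ⊓ neg (x ⊓ y) := by
            refine le_inf (le_inf inf_le_left (inf_le_right.trans inf_le_right))
              (inf_le_right.trans inf_le_left)
        _ = ⊥ := hnegE (x ⊓ y)
    rw [h2]
    exact sup_le (h3.trans le_sup_left) (inf_le_right.trans le_sup_right)
  -- claim (i)
  have c1 : ∀ a : L, dia (neg (box a)) = neg (box a) := by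
    intro a
    refine le_antisymm (hdiaE _ _ ?_) (ledia _)
    exact eqtop _ _ _ (boxEM a) (le_sup_left.trans' (lnn (box a))) le_sup_right
  -- claim (ii)
  have c2 : ∀ a : L, neg (neg (dia a)) ≤ dia a := fun a => nnEM _ (diaEM a)
  -- claim (iii)
  have c3 : ∀ a : L, dia a = neg (box (neg a)) := by
    intro a
    rw [← negdia a]
    exact le_antisymm (lnn _) (c2 a)
  -- claim (iv)
  have c4 : ∀ a b : L, box (a ⊓ dia b) = box a ⊓ dia b := by
    intro a b
    refine le_antisymm
      (le_inf (boxmono _ _ inf_le_left) ((boxle _).trans inf_le_right)) ?_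
    refine hboxI (a ⊓ dia b) (box a ⊓ dia b) ?_
    have h1 : a ⊔ (neg (box a) ⊔ neg (dia b)) = ⊤ :=
      eqtop _ _ _ (hboxE a) le_sup_left (le_sup_of_le_right le_sup_left)
    have h2 : dia b ⊔ (neg (box a) ⊔ neg (dia b)) = ⊤ :=
      eqtop _ _ _ (diaEM b) le_sup_left (le_sup_of_le_right le_sup_right)
    have h3 : (a ⊓ dia b) ⊔ (neg (box a) ⊔ neg (dia b)) = ⊤ := eqtop2 _ _ _ h1 h2
    exact eqtop _ _ _ h3 le_sup_left (le_sup_of_le_right (dm1 (box a) (dia b)))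
  -- claim (v)
  have c5 : ∀ a b : L, dia (a ⊔ box b) = dia a ⊔ box b := by
    intro a b
    refine le_antisymm (hdiaE _ _ ?_)
      (sup_le (diamono _ _ le_sup_left) (le_sup_right.trans (ledia _)))
    have hle : neg a ⊓ neg (box b) ≤ neg (a ⊔ box b) := by
      refine hnegI _ _ (le_antisymm ?_ bot_le)
      rw [inf_sup_right]
      refine sup_le ?_ ?_
      · calc a ⊓ (neg a ⊓ neg (box b)) ≤ a ⊓ neg a := inf_le_inf_left _ inf_le_left
          _ = ⊥ := hnegE a
      · calc box b ⊓ (neg a ⊓ neg (box b)) ≤ box b ⊓ neg (box b) :=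
              inf_le_inf_left _ inf_le_right
          _ = ⊥ := hnegE (box b)
    have h1 : neg a ⊔ (dia a ⊔ box b) = ⊤ :=
      eqtop _ _ _ (hdiaI a) le_sup_left (le_sup_of_le_right le_sup_left)
    have h2 : neg (box b) ⊔ (dia a ⊔ box b) = ⊤ :=
      eqtop _ _ _ (boxEM b) (le_sup_of_le_right le_sup_right) le_sup_left
    have h3 : (neg a ⊓ neg (box b)) ⊔ (dia a ⊔ box b) = ⊤ := eqtop2 _ _ _ h1 h2
    exact eqtop _ _ _ h3 (hle.trans le_sup_left) le_sup_right
  -- claim (vi)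
  have c6 : ∀ a b : L, box (a ⊔ box b) = box a ⊔ box b := by
    intro a b
    refine le_antisymm ?_
      (sup_le (boxmono _ _ le_sup_left) ((hS b).trans (boxmono _ _ le_sup_right)))
    have h2 : box (a ⊔ box b) ⊓ neg (box b) ≤ box a := by
      refine hboxI a _ ?_
      have hd2 : neg (box (a ⊔ box b)) ⊔ box b ≤
          neg (box (a ⊔ box b) ⊓ neg (box b)) :=
        (sup_le_sup_left (lnn (box b)) _).trans (dm1 _ _)
      refine eqtop _ _ _ (hboxE (a ⊔ box b)) ?_ ?_
      · exact sup_le le_sup_left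
          (le_sup_of_le_right ((le_sup_right.trans hd2)))
      · exact le_sup_of_le_right (le_sup_left.trans hd2)
    have h : box (a ⊔ box b) =
        (box (a ⊔ box b) ⊓ box b) ⊔ (box (a ⊔ box b) ⊓ neg (box b)) := by
      rw [← inf_sup_left, boxEM b, inf_top_eq]
    rw [h]
    exact sup_le (inf_le_right.trans le_sup_right) (h2.trans le_sup_left)
  -- claim (vii)
  have ddia : ∀ x : L, dia (dia x) ≤ dia x :=
    fun x => hdiaE _ _ (eqtop _ _ _ (diaEM x) le_sup_right le_sup_left)
  have c7 : ∀ a b : L, dia (a ⊓ dia b) = dia a ⊓ dia b := by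
    intro a b
    refine le_antisymm
      (le_inf (diamono _ _ inf_le_left) ((diamono _ _ inf_le_right).trans (ddia b))) ?_
    have key : dia a ≤ dia (a ⊓ dia b) ⊔ neg (dia b) := by
      refine hdiaE a _ ?_
      refine eqtop _ _ _ (hdiaI (a ⊓ dia b)) ?_ (le_sup_of_le_right le_sup_left)
      exact (dm2 a (dia b) (diaEM b)).trans
        (sup_le le_sup_left (le_sup_of_le_right le_sup_right))
    have h4 : neg (dia b) ⊓ dia b = ⊥ := by rw [inf_comm]; exact hnegE (dia b)
    calc dia a ⊓ dia b ≤ (dia (a ⊓ dia b) ⊔ neg (dia b)) ⊓ dia b :=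
          inf_le_inf_right _ key
      _ = (dia (a ⊓ dia b) ⊓ dia b) ⊔ (neg (dia b) ⊓ dia b) := inf_sup_right _ _ _
      _ ≤ dia (a ⊓ dia b) := by rw [h4, sup_bot_eq]; exact inf_le_left
  exact ⟨c1, c2, c3, c4, c5, c6, c7⟩
end

section
/- Let H be a Heyting algebra (with Heyting implication ⇨ and pseudocomplement ¬a = a ⇨ 0) equipped with a necessity operator □ and a possibility operator ◇. Then for all a, b in H: (1) □(a ⇨ b) ≤ □a ⇨ □b; (2) □(a ⇨ b) ≤ ◇a ⇨ ◇b; (3) ◇a ⇨ □b ≤ □(a ⇨ b). -/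
section Aux

variable {H : Type*} [HeytingAlgebra H]

private lemma aux_distrib (x y c d : H) :
    (x ⊔ c) ⊓ (y ⊔ d) ≤ (x ⊓ y) ⊔ (c ⊔ d) := by
  rw [inf_sup_left, inf_sup_right, inf_sup_right]
  refine sup_le (sup_le ?_ ?_) (sup_le ?_ ?_)
  · exact le_sup_left
  · exact le_sup_of_le_right (le_sup_left.trans' inf_le_left)
  · exact le_sup_of_le_right (le_sup_right.trans' inf_le_right)
  · exact le_sup_of_le_right (le_sup_left.trans' inf_le_left)

private lemma aux_inf_compl_le_bot (x : H) : x ⊓ xᶜ ≤ ⊥ := by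
  rw [← himp_bot]
  exact inf_himp_le

private lemma aux_compl_le_himp (x y : H) : xᶜ ≤ x ⇨ y := by
  rw [le_himp_iff, inf_comm]
  exact (aux_inf_compl_le_bot x).trans bot_le

private lemma aux_le_himp (x y : H) : y ≤ x ⇨ y :=
  le_himp_iff.mpr inf_le_left

private lemma aux_inf_compl_le_compl_himp (x y : H) : x ⊓ yᶜ ≤ (x ⇨ y)ᶜ := by
  rw [← himp_bot (x ⇨ y), le_himp_iff]
  have h1 : x ⊓ yᶜ ⊓ (x ⇨ y) ≤ y ⊓ yᶜ := by
    refine le_inf ?_ (inf_le_left.trans inf_le_right)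
    exact (inf_le_inf_right _ inf_le_left).trans (by rw [inf_comm]; exact himp_inf_le)
  exact h1.trans (aux_inf_compl_le_bot y)

private lemma aux_compl_sup_le (x y : H) : xᶜ ⊔ yᶜ ≤ (x ⊓ y)ᶜ :=
  sup_le (compl_anti inf_le_left) (compl_anti inf_le_right)

end Aux

/-- K-style inequalities for □ and ◇ in a Heyting algebra. -/
theorem stmt_19 {H : Type*} [HeytingAlgebra H]
    (box : H → H)
    (hboxE : ∀ a : H, a ⊔ (box a ⇨ ⊥) = ⊤)
    (hboxI : ∀ a b : H, a ⊔ (b ⇨ ⊥) = ⊤ → b ≤ box a)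
    (dia : H → H)
    (hdiaI : ∀ a : H, (a ⇨ ⊥) ⊔ dia a = ⊤)
    (hdiaE : ∀ a b : H, (a ⇨ ⊥) ⊔ b = ⊤ → dia a ≤ b) :
    ∀ a b : H,
      (box (a ⇨ b) ≤ box a ⇨ box b) ∧
      (box (a ⇨ b) ≤ dia a ⇨ dia b) ∧
      (dia a ⇨ box b ≤ box (a ⇨ b)) := by
  simp only [himp_bot] at hboxE hboxI hdiaI hdiaE
  intro a b
  refine ⟨?_, ?_, ?_⟩
  · -- □(a ⇨ b) ≤ □a ⇨ □b
    rw [le_himp_iff]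
    apply hboxI
    rw [eq_top_iff]
    calc ⊤ = ((a ⇨ b) ⊔ (box (a ⇨ b))ᶜ) ⊓ (a ⊔ (box a)ᶜ) := by
          rw [hboxE, hboxE, top_inf_eq]
      _ ≤ ((a ⇨ b) ⊓ a) ⊔ ((box (a ⇨ b))ᶜ ⊔ (box a)ᶜ) := aux_distrib _ _ _ _
      _ ≤ b ⊔ (box (a ⇨ b) ⊓ box a)ᶜ :=
          sup_le_sup himp_inf_le (aux_compl_sup_le _ _)
  · -- □(a ⇨ b) ≤ ◇a ⇨ ◇b
    rw [le_himp_iff, inf_comm, ← le_himp_iff]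
    apply hdiaE
    rw [eq_top_iff]
    calc ⊤ = ((a ⇨ b) ⊔ (box (a ⇨ b))ᶜ) ⊓ (bᶜ ⊔ dia b) := by
          rw [hboxE, hdiaI, top_inf_eq]
      _ ≤ ((a ⇨ b) ⊓ bᶜ) ⊔ ((box (a ⇨ b))ᶜ ⊔ dia b) := aux_distrib _ _ _ _
      _ ≤ aᶜ ⊔ (box (a ⇨ b) ⇨ dia b) := by
          refine sup_le_sup ?_ (sup_le (aux_compl_le_himp _ _) (aux_le_himp _ _))
          -- (a ⇨ b) ⊓ bᶜ ≤ aᶜ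
          rw [← himp_bot a, le_himp_iff]
          have h1 : (a ⇨ b) ⊓ bᶜ ⊓ a ≤ b ⊓ bᶜ := by
            refine le_inf ?_ (inf_le_left.trans inf_le_right)
            exact (inf_le_inf_right _ inf_le_left).trans himp_inf_le
          exact h1.trans (aux_inf_compl_le_bot b)
  · -- ◇a ⇨ □b ≤ □(a ⇨ b)
    apply hboxI
    rw [eq_top_iff]
    calc ⊤ = (dia a ⊔ aᶜ) ⊓ ((box b)ᶜ ⊔ b) := by
          rw [sup_comm, hdiaI, sup_comm, hboxE, top_inf_eq]
      _ ≤ (dia a ⊓ (box b)ᶜ) ⊔ (aᶜ ⊔ b) := aux_distrib _ _ _ _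
      _ ≤ (a ⇨ b) ⊔ (dia a ⇨ box b)ᶜ := by
          rw [sup_comm]
          exact sup_le_sup (sup_le (aux_compl_le_himp _ _) (aux_le_himp _ _))
            (aux_inf_compl_le_compl_himp _ _)
end
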